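/- Let f_cl : ℝⁿ × [0,∞) → ℝⁿ be locally Lipschitz in its first argument and piecewise continuous in its second, let h : ℝⁿ → ℝ be continuously differentiable, and let α : ℝ → ℝ be a locally Lipschitz, strictly increasing function with α(0) = 0. Suppose ⟨∇h(z), f_cl(z,t)⟩ ≥ -α(h(z)) for all z ∈ ℝⁿ and all t ≥ 0. Then every solution x : [0,∞) → ℝⁿ of the initial value problem ẋ(t) = f_cl(x(t),t) with h(x(0)) ≥ 0 satisfies h(x(t)) ≥ 0 for all t ≥ 0. -/

import Mathlib

/-!
Along a solution, `y t = h (x t)` has derivative `⟪∇h (x t), f_cl (x t) t⟫ ≥ -α (y t)`, which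
is positive whenever `y t < 0` because `α` is strictly increasing with `α 0 = 0`. A real function
whose right derivative is positive wherever it is negative cannot leave `[0, ∞)`.
-/

open Set

theorem HasGradientAt.comp_hasDerivWithinAt {E : Type*} [NormedAddCommGroup E]
    [InnerProductSpace ℝ E] [CompleteSpace E] {f : E → ℝ} {g : ℝ → E} {f' g' : E}
    {s : Set ℝ} {t : ℝ} (hf : HasGradientAt f f' (g t)) (hg : HasDerivWithinAt g g' s t) :
    HasDerivWithinAt (f ∘ g) (inner ℝ f' g') s t :=
  hf.hasFDerivAt.comp_hasDerivWithinAt t hg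

theorem nonneg_of_hasDerivWithinAt_pos_of_neg {y y' : ℝ → ℝ} {a : ℝ}
    (hy : ∀ t ≥ a, HasDerivWithinAt y (y' t) (Ici a) t)
    (hpos : ∀ t ≥ a, y t < 0 → 0 < y' t) (ha : 0 ≤ y a) :
    ∀ t ≥ a, 0 ≤ y t := by
  intro b hb
  -- Fence `-y` below every constant `ε > 0`: it can only reach `ε` where `y < 0`, so `-y' < 0`.
  refine le_of_forall_pos_le_add fun ε hε => ?_
  have hcont : ContinuousOn y (Icc a b) := fun t ht =>
    (hy t ht.1).continuousWithinAt.mono Icc_subset_Ici_self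
  have hfence := image_le_of_deriv_right_lt_deriv_boundary' (f := fun t => -y t)
    (B := fun _ => ε) (B' := fun _ => 0) hcont.neg
    (fun t ht => ((hy t ht.1).mono (Ici_subset_Ici.2 ht.1)).neg)
    (by linarith) continuousOn_const (fun _ _ => hasDerivWithinAt_const _ _ _)
    (fun t ht hyt => neg_lt_zero.2 (hpos t ht.1 (by linarith)))
  linarith [hfence ⟨hb, le_rfl⟩]

theorem stmt_1_general {n : ℕ}
    (f_cl : EuclideanSpace ℝ (Fin n) → ℝ → EuclideanSpace ℝ (Fin n))
    (h : EuclideanSpace ℝ (Fin n) → ℝ) (hh : ContDiff ℝ 1 h)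
    (α : ℝ → ℝ) (hα_mono : StrictMono α)
    (hα0 : α 0 = 0)
    (hcbf : ∀ z, ∀ t ≥ (0 : ℝ),
      @inner ℝ _ _ (gradient h z) (f_cl z t) ≥ -α (h z))
    (x : ℝ → EuclideanSpace ℝ (Fin n))
    (hx : ∀ t ≥ (0 : ℝ), HasDerivWithinAt x (f_cl (x t) t) (Set.Ici 0) t)
    (hx0 : 0 ≤ h (x 0)) :
    ∀ t ≥ (0 : ℝ), 0 ≤ h (x t) := by
  have hderiv : ∀ t ≥ (0 : ℝ),
      HasDerivWithinAt (h ∘ x) (inner ℝ (gradient h (x t)) (f_cl (x t) t)) (Ici 0) t :=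
    fun t ht => (hh.differentiable one_ne_zero).differentiableAt.hasGradientAt
      |>.comp_hasDerivWithinAt (hx t ht)
  refine nonneg_of_hasDerivWithinAt_pos_of_neg hderiv (fun t ht hneg => ?_) hx0
  have hαneg : α (h (x t)) < 0 := hα0 ▸ hα_mono hneg
  linarith [hcbf (x t) t ht]

/-- CBF forward-invariance theorem: if `⟪∇h z, f_cl z t⟫ ≥ -α (h z)` everywhere,
then the set `{z | h z ≥ 0}` is forward invariant for `ẋ = f_cl (x, t)`. -/
theorem stmt_1 {n : ℕ}
    (f_cl : EuclideanSpace ℝ (Fin n) → ℝ → EuclideanSpace ℝ (Fin n))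
    -- locally Lipschitz in the first argument
    (hf_lip : ∀ t ≥ (0 : ℝ), LocallyLipschitz fun z => f_cl z t)
    -- piecewise continuous in the second argument
    (hf_pc : ∀ z, ∃ D : Set ℝ, D.Countable ∧ ∀ t ∉ D, ContinuousAt (f_cl z) t)
    (h : EuclideanSpace ℝ (Fin n) → ℝ) (hh : ContDiff ℝ 1 h)
    (α : ℝ → ℝ) (hα_lip : LocallyLipschitz α) (hα_mono : StrictMono α)
    (hα0 : α 0 = 0)
    (hcbf : ∀ z, ∀ t ≥ (0 : ℝ),
      @inner ℝ _ _ (gradient h z) (f_cl z t) ≥ -α (h z))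
    (x : ℝ → EuclideanSpace ℝ (Fin n))
    (hx : ∀ t ≥ (0 : ℝ), HasDerivWithinAt x (f_cl (x t) t) (Set.Ici 0) t)
    (hx0 : 0 ≤ h (x 0)) :
    ∀ t ≥ (0 : ℝ), 0 ≤ h (x t) :=
  stmt_1_general f_cl h hh α hα_mono hα0 hcbf x hx hx0
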